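/- arXiv:2101.03404 — 4 statements merged into one kernel-verified Lean document; each statement's English description precedes it below -/
import Mathlib

section
/- Let G be a profinite group. The intersection, over all finite quotients Q of G by open normal subgroups and all chief factors A/B of Q, of the preimages in G of the centralizers C_Q(A/B), is the largest closed normal pronilpotent subgroup F(G) of G; in particular a largest closed normal pronilpotent subgroup exists and equals this intersection. -/
open scoped commutatorElement

/-- Iterated left-normed commutator: `commIter g x n = [g, x, x, ..., x]` with `n` copies of `x`. -/
def commIter {G : Type*} [Group G] (g x : G) : ℕ → G
  | 0 => g
  | n + 1 => ⁅commIter g x n, x⁆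

/-- `R` is a right Engel sink of `g`. -/
def IsRightEngelSink {G : Type*} [Group G] (g : G) (R : Set G) : Prop :=
  ∀ x : G, ∃ n₀ : ℕ, 0 < n₀ ∧ ∀ n, n₀ ≤ n → commIter g x n ∈ R

/-- `E` is a left Engel sink of `g`. -/
def IsLeftEngelSink {G : Type*} [Group G] (g : G) (E : Set G) : Prop :=
  ∀ x : G, ∃ n₀ : ℕ, 0 < n₀ ∧ ∀ n, n₀ ≤ n → commIter x g n ∈ E

/-- A group is locally nilpotent if every finitely generated subgroup is nilpotent. -/
def IsLocallyNilpotent (G : Type*) [Group G] : Prop :=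
  ∀ S : Finset G, Group.IsNilpotent ↥(Subgroup.closure (S : Set G))

/-- A topological group is pronilpotent if every quotient by an open normal subgroup
is nilpotent. -/
def IsPronilpotent (G : Type*) [Group G] [TopologicalSpace G] : Prop :=
  ∀ (N : Subgroup G) (hN : N.Normal), IsOpen (N : Set G) →
    (haveI := hN; Group.IsNilpotent (G ⧸ N))

/-- All quotients of `G` by open normal subgroups have order coprime to `k`;
this is the coprimality condition for an automorphism of order `k` of `G`. -/
def QuotientsCoprimeTo (G : Type*) [Group G] [TopologicalSpace G] (k : ℕ) : Prop :=
  ∀ N : Subgroup G, N.Normal → IsOpen (N : Set G) → Nat.Coprime N.index k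

/-- `F` is the largest closed normal pronilpotent subgroup of `G`
(the pronilpotent radical `F(G)`). -/
def IsPronilpotentRadical (G : Type*) [Group G] [TopologicalSpace G] (F : Subgroup G) : Prop :=
  IsClosed (F : Set G) ∧ F.Normal ∧ IsPronilpotent ↥F ∧
    ∀ K : Subgroup G, IsClosed (K : Set G) → K.Normal → IsPronilpotent ↥K → K ≤ F

/-- `F2` is the second term of the pronilpotent series: the preimage in `G` of the
pronilpotent radical of `G ⧸ F`. -/
def IsSecondRadical (G : Type*) [Group G] [TopologicalSpace G] (F : Subgroup G) [F.Normal]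
    (F2 : Subgroup G) : Prop :=
  ∃ Fq : Subgroup (G ⧸ F), IsPronilpotentRadical (G ⧸ F) Fq ∧
    F2 = Fq.comap (QuotientGroup.mk' F)

/-- The Frattini subgroup of a topological group: the intersection of all maximal
open subgroups. -/
def frattiniOpen (G : Type*) [Group G] [TopologicalSpace G] : Subgroup G :=
  ⨅ (M : Subgroup G) (_ : IsOpen (M : Set G) ∧ IsCoatom M), M

/-- `γ_∞(G)`: the intersection of the closures of the lower central series. -/
def gammaInf (G : Type*) [Group G] [TopologicalSpace G] [IsTopologicalGroup G] : Subgroup G :=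
  ⨅ n : ℕ, ((⊤ : Subgroup G).lowerCentralSeries n).topologicalClosure

/-- `g` is a `p`-element: the closed subgroup it topologically generates is pro-`p`. -/
def IsPElement {G : Type*} [Group G] [TopologicalSpace G] [IsTopologicalGroup G]
    (p : ℕ) (g : G) : Prop :=
  ∀ M : Subgroup ↥((Subgroup.closure {g}).topologicalClosure),
    M.Normal → IsOpen (M : Set ↥((Subgroup.closure {g}).topologicalClosure)) →
      ∃ k : ℕ, M.index = p ^ k

/-- `K` is the Hall `p'`-subgroup of the pronilpotent group `F`: the largest closed
subgroup normal in `F` all of whose finite quotients have order coprime to `p`. -/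
def IsHallPComplement (G : Type*) [Group G] [TopologicalSpace G] (p : ℕ)
    (F K : Subgroup G) : Prop :=
  K ≤ F ∧ IsClosed (K : Set G) ∧ (K.subgroupOf F).Normal ∧ QuotientsCoprimeTo ↥K p ∧
    ∀ K' : Subgroup G, K' ≤ F → IsClosed (K' : Set G) → (K'.subgroupOf F).Normal →
      QuotientsCoprimeTo ↥K' p → K' ≤ K
/-- The intersection, over all finite quotients `Q = G ⧸ N` of `G` by open normal
subgroups `N` and all chief factors `A/B` of `Q`, of the preimages in `G` of the
centralizers `C_Q(A/B)`. -/
def chiefCentralizersIntersection (G : Type*) [Group G] [TopologicalSpace G] : Set G :=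
  {g : G | ∀ (N : Subgroup G) (hN : N.Normal), IsOpen (N : Set G) →
    (haveI := hN;
      ∀ A B : Subgroup (G ⧸ N), A.Normal → B.Normal → B < A →
        (∀ K : Subgroup (G ⧸ N), K.Normal → B ≤ K → K ≤ A → K = B ∨ K = A) →
        ∀ a : G ⧸ N, a ∈ A → ⁅a, QuotientGroup.mk' N g⁆ ∈ B)}

/-!
A nilpotent normal subgroup `H` of a finite group centralizes every chief factor `A/B`:
otherwise `[A, H]B = A`, so `A/B` would be a nontrivial subgroup of the nilpotent group `HB/B`
equal to its own commutator with `HB/B`. Conversely, intersecting a chief series with a normal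
subgroup `H` that centralizes all chief factors gives a central series of `H`. Pronilpotence of a
subgroup of a profinite group is detected on its images in the finite quotients `G/N`, so the
intersection of the preimages of all chief-factor centralizers is pronilpotent and contains every
normal pronilpotent subgroup.
-/

open QuotientGroup Subgroup

section ChiefFactors

variable {Q : Type*} [Group Q]

structure IsChiefFactor (A B : Subgroup Q) : Prop where
  upper_normal : A.Normal
  lower_normal : B.Normal
  lt : B < A
  eq_or_eq : ∀ K : Subgroup Q, K.Normal → B ≤ K → K ≤ A → K = B ∨ K = A

def sectionCentralizer (A B : Subgroup Q) [B.Normal] : Subgroup Q :=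
  (centralizer (A.map (mk' B) : Set (Q ⧸ B))).comap (mk' B)

theorem mem_sectionCentralizer {A B : Subgroup Q} [B.Normal] {q : Q} :
    q ∈ sectionCentralizer A B ↔ ∀ a ∈ A, ⁅a, q⁆ ∈ B := by
  simp only [sectionCentralizer, mem_comap, mem_centralizer_iff, SetLike.mem_coe, mem_map,
    forall_exists_index, and_imp, forall_apply_eq_imp_iff₂]
  refine forall₂_congr fun a _ => ?_
  rw [← QuotientGroup.eq_one_iff, ← mk'_apply, map_commutatorElement,
    commutatorElement_eq_one_iff_commute, Commute, SemiconjBy, eq_comm]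

instance sectionCentralizer_normal (A B : Subgroup Q) [A.Normal] [B.Normal] :
    (sectionCentralizer A B).Normal :=
  have : (A.map (mk' B)).Normal := ‹A.Normal›.map _ (mk'_surjective B)
  Normal.comap inferInstance _

def chiefCentralizers (Q : Type*) [Group Q] : Subgroup Q :=
  ⨅ (A : Subgroup Q) (B : Subgroup Q) (h : IsChiefFactor A B),
    have := h.lower_normal; sectionCentralizer A B

theorem mem_chiefCentralizers {q : Q} :
    q ∈ chiefCentralizers Q ↔ ∀ A B : Subgroup Q, IsChiefFactor A B → ∀ a ∈ A, ⁅a, q⁆ ∈ B := by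
  simp only [chiefCentralizers, mem_iInf, mem_sectionCentralizer]

instance chiefCentralizers_normal : (chiefCentralizers Q).Normal :=
  normal_iInf_normal fun A => normal_iInf_normal fun B => normal_iInf_normal fun h =>
    have := h.upper_normal; have := h.lower_normal; sectionCentralizer_normal A B

theorem eq_bot_of_le_commutator_of_isNilpotent {N H : Subgroup Q} [H.Normal]
    [Group.IsNilpotent H] (h : N ≤ ⁅N, H⁆) : N = ⊥ := by
  have hH : (⊤ : Subgroup H).map H.subtype = H := by rw [← MonoidHom.range_eq_map, range_subtype]
  have hN : ∀ n, N ≤ ((⊤ : Subgroup H).lowerCentralSeries n).map H.subtype := by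
    intro n
    induction n with
    | zero => simpa [hH] using h.trans (commutator_le_right N H)
    | succ n ih =>
      calc N ≤ ⁅N, H⁆ := h
        _ ≤ ⁅((⊤ : Subgroup H).lowerCentralSeries n).map H.subtype, H⁆ := commutator_mono ih le_rfl
        _ = ((⊤ : Subgroup H).lowerCentralSeries (n + 1)).map H.subtype := by
          rw [Subgroup.lowerCentralSeries_succ, map_commutator, hH]
  obtain ⟨n, hn⟩ := Subgroup.nilpotent_iff_lowerCentralSeries.1 ‹_›
  simpa [hn] using hN n

theorem IsChiefFactor.commutator_mem_of_isNilpotent {A B : Subgroup Q} (hAB : IsChiefFactor A B)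
    (H : Subgroup Q) [H.Normal] [Group.IsNilpotent H] {a h : Q} (ha : a ∈ A) (hh : h ∈ H) :
    ⁅a, h⁆ ∈ B := by
  have := hAB.upper_normal
  have := hAB.lower_normal
  set A' := A.map (mk' B)
  set H' := H.map (mk' B)
  have : A'.Normal := ‹A.Normal›.map _ (mk'_surjective B)
  have : H'.Normal := ‹H.Normal›.map _ (mk'_surjective B)
  have : Group.IsNilpotent H' :=
    Group.nilpotent_of_surjective ((mk' B).subgroupMap H) ((mk' B).subgroupMap_surjective H)
  have hK : (⁅A', H'⁆.comap (mk' B)).Normal := Normal.comap inferInstance _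
  have hKA : ⁅A', H'⁆.comap (mk' B) ≤ A := by
    simpa [A', sup_of_le_right hAB.lt.le] using comap_mono (f := mk' B) (commutator_le_left A' H')
  rcases hAB.eq_or_eq _ hK (le_comap_mk' B _) hKA with hB | hA
  · refine hB.le ?_
    rw [mem_comap, map_commutatorElement]
    exact commutator_mem_commutator (mem_map_of_mem _ ha) (mem_map_of_mem _ hh)
  · have hA' : A' = ⁅A', H'⁆ := by
      rw [← map_comap_eq_self_of_surjective (mk'_surjective B) ⁅A', H'⁆, hA]
    have : A ≤ B := by
      simpa [A', Subgroup.map_eq_bot_iff] using eq_bot_of_le_commutator_of_isNilpotent hA'.le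
    exact absurd this hAB.lt.not_ge

theorem le_chiefCentralizers_of_isNilpotent (H : Subgroup Q) [H.Normal] [Group.IsNilpotent H] :
    H ≤ chiefCentralizers Q := fun _ hh =>
  mem_chiefCentralizers.2 fun _ _ hAB _ ha => hAB.commutator_mem_of_isNilpotent H ha hh

theorem exists_isChiefFactor [Finite Q] {A : Subgroup Q} (hA : A.Normal) (hne : A ≠ ⊥) :
    ∃ B, IsChiefFactor A B := by
  obtain ⟨B, hB⟩ := Set.Finite.exists_maximal (Set.toFinite {B : Subgroup Q | B.Normal ∧ B < A})
    ⟨⊥, normal_bot, bot_lt_iff_ne_bot.2 hne⟩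
  refine ⟨B, hA, hB.prop.1, hB.prop.2, fun K hK hBK hKA => ?_⟩
  rcases hKA.lt_or_eq with hKA | hKA
  · exact Or.inl (hB.eq_of_ge ⟨hK, hKA⟩ hBK)
  · exact Or.inr hKA

theorem isNilpotent_of_le_chiefCentralizers [Finite Q] {H : Subgroup Q}
    (hH : H ≤ chiefCentralizers Q) : Group.IsNilpotent H := by
  have hcentral :
      ∀ A : Subgroup Q, A.Normal → ∃ n, A.subgroupOf H ≤ Subgroup.upperCentralSeries H n := by
    intro A
    induction A using WellFoundedLT.induction with
    | _ A ih =>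
      intro hA
      rcases eq_or_ne A ⊥ with rfl | hne
      · exact ⟨0, by simp⟩
      obtain ⟨B, hAB⟩ := exists_isChiefFactor hA hne
      obtain ⟨n, hn⟩ := ih B hAB.lt hAB.lower_normal
      exact ⟨n + 1, fun x hx => Subgroup.mem_upperCentralSeries_succ_iff.2 fun y =>
        hn (mem_chiefCentralizers.1 (hH y.2) A B hAB x hx)⟩
  obtain ⟨n, hn⟩ := hcentral ⊤ normal_top
  exact ⟨n, by simpa using hn⟩

end ChiefFactors

section Profinite

variable {G : Type*} [Group G]

theorem isNilpotent_map_mk'_iff (K N : Subgroup G) [N.Normal] :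
    Group.IsNilpotent (K.map (mk' N)) ↔ Group.IsNilpotent (K ⧸ N.subgroupOf K) := by
  have hker : ((mk' N).subgroupMap K).ker = N.subgroupOf K := by rw [ker_subgroupMap, ker_mk']
  exact (Group.isNilpotent_congr <| (quotientMulEquivOfEq hker).symm.trans <|
    quotientKerEquivOfSurjective _ ((mk' N).subgroupMap_surjective K)).symm

variable [TopologicalSpace G]

theorem IsPronilpotent.isNilpotent_map {K : Subgroup G} (hK : IsPronilpotent K)
    (N : OpenNormalSubgroup G) : Group.IsNilpotent (K.map (mk' (N : Subgroup G))) :=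
  (isNilpotent_map_mk'_iff K N).2 <|
    hK _ inferInstance (N.isOpen'.preimage continuous_subtype_val)

theorem isPronilpotent_of_forall_isNilpotent_map [IsTopologicalGroup G] [CompactSpace G]
    [TotallyDisconnectedSpace G] {K : Subgroup G}
    (hK : ∀ N : OpenNormalSubgroup G, Group.IsNilpotent (K.map (mk' (N : Subgroup G)))) :
    IsPronilpotent K := by
  intro M hM hMopen
  obtain ⟨U, hU, hUM⟩ := isOpen_induced_iff.1 hMopen
  have h1U : (1 : G) ∈ U := by simpa using hUM.ge M.one_mem
  obtain ⟨N, hNU⟩ := ProfiniteGrp.exist_openNormalSubgroup_sub_open_nhds_of_one hU h1U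
  have hNM : (N : Subgroup G).subgroupOf K ≤ M := fun x hx => hUM.le (hNU hx)
  have := (isNilpotent_map_mk'_iff K N).1 (hK N)
  exact Group.nilpotent_of_surjective (QuotientGroup.map _ M (MonoidHom.id K) hNM)
    (QuotientGroup.map_surjective_of_surjective _ M (MonoidHom.id K) mk_surjective hNM)

end Profinite

section Radical

variable (G : Type*) [Group G] [TopologicalSpace G]

def pronilpotentRadical : Subgroup G :=
  ⨅ N : OpenNormalSubgroup G, (chiefCentralizers (G ⧸ (N : Subgroup G))).comap (mk' _)

variable {G}

theorem coe_pronilpotentRadical :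
    (pronilpotentRadical G : Set G) = chiefCentralizersIntersection G := by
  ext g
  simp only [pronilpotentRadical, SetLike.mem_coe, mem_iInf, mem_comap, mem_chiefCentralizers]
  constructor
  · intro h N hN hNopen A B hA hB hBA hAB
    exact h { toSubgroup := N, isOpen' := hNopen, isNormal' := hN } A B ⟨hA, hB, hBA, hAB⟩
  · intro h N A B hAB
    exact h N N.isNormal' N.isOpen' A B hAB.1 hAB.2 hAB.3 hAB.4

instance pronilpotentRadical_normal : (pronilpotentRadical G).Normal :=
  normal_iInf_normal fun _ => Normal.comap inferInstance _

theorem isClosed_pronilpotentRadical [IsTopologicalGroup G] :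
    IsClosed (pronilpotentRadical G : Set G) := by
  rw [pronilpotentRadical, coe_iInf]
  exact isClosed_iInter fun N => isClosed_of_isOpen _ <| isOpen_mono (le_comap_mk' _ _) N.isOpen'

theorem isPronilpotent_pronilpotentRadical [IsTopologicalGroup G] [CompactSpace G]
    [TotallyDisconnectedSpace G] : IsPronilpotent (pronilpotentRadical G) :=
  isPronilpotent_of_forall_isNilpotent_map fun N =>
    isNilpotent_of_le_chiefCentralizers <| map_le_iff_le_comap.2 <| iInf_le _ N

theorem le_pronilpotentRadical {K : Subgroup G}
    (hK : K.Normal) (hKpro : IsPronilpotent K) : K ≤ pronilpotentRadical G :=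
  le_iInf fun N =>
    have := hK.map _ (mk'_surjective (N : Subgroup G))
    have := hKpro.isNilpotent_map N
    map_le_iff_le_comap.1 <| le_chiefCentralizers_of_isNilpotent _

end Radical

theorem pronilpotent_radical_eq_chief_centralizers_general
    (G : Type) [Group G] [TopologicalSpace G] [IsTopologicalGroup G]
    [CompactSpace G] [TotallyDisconnectedSpace G] :
    ∃ F : Subgroup G, IsPronilpotentRadical G F ∧
      (F : Set G) = chiefCentralizersIntersection G :=
  ⟨pronilpotentRadical G,
    ⟨isClosed_pronilpotentRadical, inferInstance, isPronilpotent_pronilpotentRadical,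
      fun _ _ hK hKpro => le_pronilpotentRadical hK hKpro⟩,
    coe_pronilpotentRadical⟩

theorem pronilpotent_radical_eq_chief_centralizers
    (G : Type) [Group G] [TopologicalSpace G] [IsTopologicalGroup G]
    [CompactSpace G] [T2Space G] [TotallyDisconnectedSpace G] :
    ∃ F : Subgroup G, IsPronilpotentRadical G F ∧
      (F : Set G) = chiefCentralizersIntersection G :=
  pronilpotent_radical_eq_chief_centralizers_general G
end

section
/- Let G be a profinite group, p a prime, and g a p-element of G lying in F₂(G) but not in F(G). Then g induces by conjugation a non-trivial automorphism of the Hall p'-subgroup H of F(G), i.e. [H, g] ≠ 1. -/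
open scoped commutatorElement

/-! If `g` centralized the Hall `p'`-subgroup `H` of `F = F(G)`, the closed normal subgroup `K`
generated by `g` would be pronilpotent, hence contained in `F`, although `g ∉ F`.

Since the finite images of `F` are nilpotent, the elements of `F` whose images in all finite
quotients are `p'`-elements form a closed normal subgroup with `p'`-quotients, which therefore
lies in `H`. Modulo an open normal `U`, every `p'`-element `ȳ` of `F̄` lifts to it: if `f ∈ F`
lifts `ȳ`, take a cluster point of the powers `f ^ t ^ k`, where `t = p ^ φ (ord ȳ)`: as
`t ≡ 1 [MOD ord ȳ]` it maps to `ȳ`, and as `p ∣ t` its images are `p'`-elements. So `K̄`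
centralizes `H̄`. As `F₂ / F` is pronilpotent and `g` is a `p`-element, every element of `K̄` has a
`p`-power in `F̄`, hence a further `p`-power in `H̄`. Thus `K̄` is a central extension of a
`p`-group, so it is nilpotent. -/

open Subgroup

section FiniteGroup

variable {X : Type*} [Group X]

theorem mem_of_pow_mem_of_coprime {S : Subgroup X} {x : X} {a b : ℕ} (hab : a.Coprime b)
    (ha : x ^ a ∈ S) (hb : x ^ b ∈ S) : x ∈ S := by
  have hbezout : x = (x ^ a) ^ a.gcdA b * (x ^ b) ^ a.gcdB b := by
    rw [← zpow_natCast, ← zpow_natCast, ← zpow_mul, ← zpow_mul, ← zpow_add, ← Nat.gcd_eq_gcd_ab,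
      hab.gcd_eq_one, Nat.cast_one, zpow_one]
  rw [hbezout]
  exact mul_mem (zpow_mem ha _) (zpow_mem hb _)

theorem coprime_orderOf_pow {p n : ℕ} (hp : p.Prime) {x : X} (hx : orderOf x ≠ 0)
    (hn : p ^ (orderOf x).factorization p ∣ n) : (orderOf (x ^ n)).Coprime p := by
  obtain ⟨m, rfl⟩ := hn
  refine Nat.Coprime.coprime_dvd_left (orderOf_dvd_of_pow_eq_one ?_)
    (Nat.coprime_ordCompl hp hx).symm
  rw [← pow_mul, mul_right_comm, Nat.ordProj_mul_ordCompl_eq_self, pow_mul, pow_orderOf_eq_one,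
    one_pow]

theorem card_sup_dvd (M₁ M₂ : Subgroup X) [M₁.Normal] :
    Nat.card ↥(M₁ ⊔ M₂) ∣ Nat.card M₁ * Nat.card M₂ := by
  rw [← relIndex_bot_left, ← relIndex_mul_relIndex ⊥ M₁ _ bot_le le_sup_left, relIndex_sup_left,
    relIndex_bot_left]
  exact mul_dvd_mul_left _ (relIndex_dvd_card _ _)

theorem coprime_card_of_forall_coprime_orderOf [Finite X] {p : ℕ} [hp : Fact p.Prime]
    (h : ∀ x : X, (orderOf x).Coprime p) : (Nat.card X).Coprime p := by
  refine Nat.coprime_comm.mp ((Nat.Prime.coprime_iff_not_dvd hp.out).mpr fun hdvd => ?_)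
  obtain ⟨x, hx⟩ := exists_prime_orderOf_dvd_card' p hdvd
  have hxp := h x
  rw [hx, Nat.coprime_self] at hxp
  exact hp.out.one_lt.ne' hxp

end FiniteGroup

section FiniteNilpotent

variable {N : Type*} [Group N] [Finite N] [Group.IsNilpotent N]

theorem mem_sylow_of_pow_eq_one {p : ℕ} [Fact p.Prime] (P : Sylow p N) {x : N} {i : ℕ}
    (hx : x ^ p ^ i = 1) : x ∈ P := by
  obtain ⟨k, -, hk⟩ := (Nat.dvd_prime_pow Fact.out).mp (orderOf_dvd_of_pow_eq_one hx)
  obtain ⟨Q, hQ⟩ := (IsPGroup.of_card ((Nat.card_zpowers x).trans hk)).exists_le_sylow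
  have := Sylow.unique_of_normal P inferInstance
  exact Subsingleton.elim Q P ▸ hQ (mem_zpowers x)

theorem exists_pow_eq_one_mul {p : ℕ} [Fact p.Prime] {a b : N} {i j : ℕ} (ha : a ^ p ^ i = 1)
    (hb : b ^ p ^ j = 1) : ∃ k, (a * b) ^ p ^ k = 1 := by
  obtain ⟨P⟩ := (inferInstance : Nonempty (Sylow p N))
  obtain ⟨k, hk⟩ := P.isPGroup' ⟨a * b, mul_mem (mem_sylow_of_pow_eq_one P ha)
    (mem_sylow_of_pow_eq_one P hb)⟩
  exact ⟨k, congrArg Subtype.val hk⟩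

theorem exists_normal_coprime_card_mem {p : ℕ} (hp : p.Prime) {x : N}
    (hx : (orderOf x).Coprime p) :
    ∃ M : Subgroup N, M.Normal ∧ (Nat.card M).Coprime p ∧ x ∈ M := by
  induction hn : orderOf x using Nat.strong_induction_on generalizing x with
  | _ n ih =>
  subst hn
  obtain h1 | ⟨q, hq, hqx⟩ := (eq_or_ne (orderOf x) 1).imp_right Nat.exists_prime_and_dvd
  · exact ⟨⊥, inferInstance, by simp, by simp [orderOf_eq_one_iff.mp h1]⟩
  have : Fact q.Prime := ⟨hq⟩
  have hx0 : orderOf x ≠ 0 := (orderOf_pos x).ne'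
  set e := (orderOf x).factorization q
  have hqe : q ^ e ∣ orderOf x := Nat.ordProj_dvd _ _
  -- the `q`-part of `x` lies in a normal Sylow `q`-subgroup, its `q'`-part has smaller order
  obtain ⟨Q, hQ⟩ : ∃ Q : Sylow q N, x ^ (orderOf x / q ^ e) ∈ Q :=
    ⟨Classical.arbitrary _, mem_sylow_of_pow_eq_one _ (i := e) (by
      rw [← pow_mul, Nat.div_mul_cancel hqe, pow_orderOf_eq_one])⟩
  have hz : orderOf (x ^ q ^ e) = orderOf x / q ^ e :=
    orderOf_pow_of_dvd (pow_pos hq.pos e).ne' hqe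
  obtain ⟨M, hMn, hMp, hzM⟩ := ih _ (hz ▸ Nat.div_lt_self (orderOf_pos x)
      (Nat.one_lt_pow (hq.factorization_pos_of_dvd hx0 hqx).ne' hq.one_lt))
    (hz ▸ hx.coprime_dvd_left (Nat.div_dvd_of_dvd hqe)) rfl
  have hqp : q ≠ p := by
    rintro rfl
    exact hq.one_lt.ne' (Nat.dvd_one.mp (hx ▸ Nat.dvd_gcd hqx dvd_rfl))
  have hQp : (Nat.card Q).Coprime p := by
    obtain ⟨k, hk⟩ := IsPGroup.iff_card.mp Q.isPGroup'
    exact hk ▸ ((Nat.coprime_primes hq hp).mpr hqp).pow_left k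
  refine ⟨M ⊔ Q, sup_normal _ _, (hMp.mul_left hQp).coprime_dvd_left (card_sup_dvd M Q),
    mem_of_pow_mem_of_coprime ((Nat.coprime_ordCompl hq hx0).pow_left e).symm
      (mem_sup_right hQ) (mem_sup_left hzM)⟩

theorem coprime_orderOf_mul {p : ℕ} (hp : p.Prime) {a b : N} (ha : (orderOf a).Coprime p)
    (hb : (orderOf b).Coprime p) : (orderOf (a * b)).Coprime p := by
  obtain ⟨M₁, _, hM₁, haM⟩ := exists_normal_coprime_card_mem hp ha
  obtain ⟨M₂, _, hM₂, hbM⟩ := exists_normal_coprime_card_mem hp hb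
  exact ((hM₁.mul_left hM₂).coprime_dvd_left
    ((orderOf_dvd_natCard _ (mul_mem (mem_sup_left haM) (mem_sup_right hbM))).trans
      (card_sup_dvd M₁ M₂)))

end FiniteNilpotent

theorem exists_pow_eq_one_of_mem_normalClosure {Z : Type*} [Group Z] {p : ℕ} [Fact p.Prime]
    {N : Subgroup Z} [N.Normal] [Finite N] [Group.IsNilpotent N] {a : Z} (ha : a ∈ N)
    (hpa : ∃ i, a ^ p ^ i = 1) {x : Z} (hx : x ∈ normalClosure {a}) : ∃ j, x ^ p ^ j = 1 := by
  suffices x ∈ N ∧ ∃ j, x ^ p ^ j = 1 from this.2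
  induction hx using closure_induction with
  | mem c hc =>
    obtain ⟨a', rfl, hconj⟩ := Group.mem_conjugatesOfSet_iff.mp hc
    obtain ⟨u, rfl⟩ := isConj_iff.mp hconj
    obtain ⟨i, hi⟩ := hpa
    exact ⟨‹N.Normal›.conj_mem _ ha u, i, by rw [conj_pow, hi, mul_one, mul_inv_cancel]⟩
  | one => exact ⟨one_mem _, 0, one_pow _⟩
  | mul y z _ _ hy hz =>
    obtain ⟨hyN, i, hyi⟩ := hy
    obtain ⟨hzN, j, hzj⟩ := hz
    obtain ⟨k, hk⟩ := exists_pow_eq_one_mul (a := (⟨y, hyN⟩ : N)) (b := ⟨z, hzN⟩)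
      (i := i) (j := j) (Subtype.ext hyi) (Subtype.ext hzj)
    exact ⟨mul_mem hyN hzN, k, congrArg Subtype.val hk⟩
  | inv y _ hy =>
    obtain ⟨hyN, i, hyi⟩ := hy
    exact ⟨inv_mem hyN, i, by rw [inv_pow, hyi, inv_one]⟩

theorem isNilpotent_of_le_centralizer_of_pow_mem {X : Type*} [Group X] [Finite X] {p : ℕ}
    [Fact p.Prime] {K C : Subgroup X} (hKC : K ≤ centralizer C)
    (hpow : ∀ x ∈ K, ∃ j, x ^ p ^ j ∈ C) : Group.IsNilpotent K := by
  have hcenter : C.subgroupOf K ≤ center K := fun c hc => mem_center_iff.mpr fun b =>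
    Subtype.ext (mem_centralizer_iff.mp (hKC b.2) c hc).symm
  have : (C.subgroupOf K).Normal := ⟨fun n hn g => by
    rwa [mem_center_iff.mp (hcenter hn) g, mul_inv_cancel_right]⟩
  have : IsPGroup p (K ⧸ C.subgroupOf K) := by
    rintro ⟨b⟩
    obtain ⟨j, hj⟩ := hpow b b.2
    exact ⟨j, (QuotientGroup.eq_one_iff _).mpr hj⟩
  have := this.isNilpotent
  exact Subgroup.isNilpotent_of_ker_le_center (QuotientGroup.mk' _)
    ((QuotientGroup.ker_mk' _).trans_le hcenter)

noncomputable def quotientKerDomRestrictEquivMap {Y B : Type*} [Group Y] [Group B]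
    (K : Subgroup Y) (φ : Y →* B) : K ⧸ (φ.domRestrict K).ker ≃* K.map φ :=
  (QuotientGroup.quotientKerEquivRange _).trans (MulEquiv.subgroupCongr (φ.domRestrict_range K))

section Profinite

variable {G : Type*} [Group G] [TopologicalSpace G]

theorem IsPronilpotent.isNilpotent_map_s5 {B : Type*} [Group B] {K : Subgroup G}
    (hK : IsPronilpotent K) (φ : G →* B) (hφ : IsOpen (φ.ker : Set G)) :
    Group.IsNilpotent (K.map φ) := by
  have := hK _ (φ.domRestrict K).normal_ker
    (by rw [MonoidHom.ker_domRestrict]; exact hφ.preimage continuous_subtype_val)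
  exact Group.nilpotent_of_mulEquiv (quotientKerDomRestrictEquivMap K φ)

variable [IsTopologicalGroup G]

theorem MapClusterPt.exists_ge_mk_eq {u : ℕ → G} {w : G}
    (hw : MapClusterPt w Filter.atTop u) (U : OpenNormalSubgroup G) (n : ℕ) :
    ∃ k ≥ n, QuotientGroup.mk' (U : Subgroup G) (u k) = QuotientGroup.mk' (U : Subgroup G) w := by
  have := QuotientGroup.discreteTopology U.isOpen
  exact Filter.frequently_atTop.mp (hw.frequently (((isOpen_discrete
    {(w : G ⧸ (U : Subgroup G))}).preimage QuotientGroup.continuous_mk).mem_nhds rfl)) n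

theorem IsPElement.exists_orderOf_mk_dvd {p : ℕ} {g : G} (hg : IsPElement p g) (U : Subgroup G)
    [U.Normal] (hU : IsOpen (U : Set G)) : ∃ k, orderOf (QuotientGroup.mk' U g) ∣ p ^ k := by
  set C := (Subgroup.closure {g}).topologicalClosure
  obtain ⟨k, hk⟩ := hg (U.subgroupOf C) inferInstance (hU.preimage continuous_subtype_val)
  refine ⟨k, hk ▸ ?_⟩
  have hgC : g ∈ C := le_topologicalClosure _ (subset_closure rfl)
  have := orderOf_dvd_natCard _ (mem_map_of_mem (QuotientGroup.mk' U) hgC)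
  rwa [← relIndex_ker, QuotientGroup.ker_mk'] at this

theorem map_topologicalClosure_mk' (L : Subgroup G) (U : OpenNormalSubgroup G) :
    L.topologicalClosure.map (QuotientGroup.mk' (U : Subgroup G)) =
      L.map (QuotientGroup.mk' (U : Subgroup G)) := by
  have := QuotientGroup.discreteTopology U.isOpen
  have hcont : Continuous (QuotientGroup.mk' (U : Subgroup G)) := QuotientGroup.continuous_mk
  refine le_antisymm ?_ (map_mono (le_topologicalClosure L))
  rw [map_le_iff_le_comap]
  refine Subgroup.topologicalClosure_minimal _ (Subgroup.le_comap_map _ _) ?_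
  rw [coe_comap]
  exact (isClosed_discrete _).preimage hcont

variable [CompactSpace G]

theorem exists_openNormalSubgroup_subgroupOf_le [TotallyDisconnectedSpace G] (K : Subgroup G)
    {V : Subgroup K} (hV : IsOpen (V : Set K)) :
    ∃ U : OpenNormalSubgroup G, (U : Subgroup G).subgroupOf K ≤ V := by
  obtain ⟨O, hO, hOV⟩ := isOpen_induced_iff.mp hV
  have h1O : (1 : G) ∈ O := by
    have := V.one_mem
    rwa [← SetLike.mem_coe, ← hOV] at this
  obtain ⟨U, hU⟩ := ProfiniteGrp.exist_openNormalSubgroup_sub_open_nhds_of_one hO h1O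
  exact ⟨U, fun x hx => by rw [← SetLike.mem_coe, ← hOV]; exact hU hx⟩

theorem isPronilpotent_of_isNilpotent_map [TotallyDisconnectedSpace G] {K : Subgroup G}
    (h : ∀ U : OpenNormalSubgroup G,
      Group.IsNilpotent (K.map (QuotientGroup.mk' (U : Subgroup G)))) :
    IsPronilpotent K := by
  intro V _ hV
  obtain ⟨U, hUV⟩ := exists_openNormalSubgroup_subgroupOf_le K hV
  set π := QuotientGroup.mk' (U : Subgroup G)
  have hπV : (π.domRestrict K).ker ≤ V := by rwa [MonoidHom.ker_domRestrict, QuotientGroup.ker_mk']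
  have := Group.nilpotent_of_mulEquiv (quotientKerDomRestrictEquivMap K π).symm
  refine Group.nilpotent_of_surjective (QuotientGroup.map _ _ (MonoidHom.id K) hπV) ?_
  rintro ⟨x⟩
  exact ⟨QuotientGroup.mk x, rfl⟩

theorem quotientsCoprimeTo_of_coprime_orderOf_mk [TotallyDisconnectedSpace G] {p : ℕ}
    [Fact p.Prime] {K : Subgroup G}
    (h : ∀ U : OpenNormalSubgroup G, ∀ x ∈ K,
      (orderOf (QuotientGroup.mk' (U : Subgroup G) x)).Coprime p) :
    QuotientsCoprimeTo K p := by
  intro V _ hV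
  obtain ⟨U, hUV⟩ := exists_openNormalSubgroup_subgroupOf_le K hV
  have hcard : (Nat.card (K.map (QuotientGroup.mk' (U : Subgroup G)))).Coprime p :=
    coprime_card_of_forall_coprime_orderOf (by
      intro y
      obtain ⟨x, hx, hxy⟩ := y.2
      rw [← Subgroup.orderOf_coe, ← hxy]
      exact h U x hx)
  refine hcard.coprime_dvd_left ((index_dvd_of_le hUV).trans ?_)
  rw [← relIndex_ker, QuotientGroup.ker_mk']
  rfl

end Profinite

section HallPComplement

variable {G : Type*} [Group G] [TopologicalSpace G] [IsTopologicalGroup G] [CompactSpace G]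

def hallPComplement (p : ℕ) [Fact p.Prime] (F : Subgroup G) (hF : IsPronilpotent F) :
    Subgroup G where
  carrier := {x | x ∈ F ∧ ∀ U : OpenNormalSubgroup G,
    (orderOf (QuotientGroup.mk' (U : Subgroup G) x)).Coprime p}
  one_mem' := ⟨one_mem F, fun U => by simp⟩
  inv_mem' := fun ⟨hxF, hx⟩ => ⟨inv_mem hxF, fun U => by simpa using hx U⟩
  mul_mem' := by
    rintro a b ⟨haF, ha⟩ ⟨hbF, hb⟩
    refine ⟨mul_mem haF hbF, fun U => ?_⟩
    have := hF.isNilpotent_map_s5 (QuotientGroup.mk' (U : Subgroup G))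
      (by rw [QuotientGroup.ker_mk']; exact U.isOpen)
    have hab := coprime_orderOf_mul (N := F.map (QuotientGroup.mk' (U : Subgroup G))) Fact.out
      (a := ⟨_, mem_map_of_mem (QuotientGroup.mk' (U : Subgroup G)) haF⟩)
      (b := ⟨_, mem_map_of_mem (QuotientGroup.mk' (U : Subgroup G)) hbF⟩)
      (by rw [orderOf_mk]; exact ha U) (by rw [orderOf_mk]; exact hb U)
    rwa [← orderOf_coe, MulMemClass.coe_mul, ← map_mul] at hab

variable {p : ℕ} [Fact p.Prime] {F : Subgroup G} {hF : IsPronilpotent F}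

theorem mem_hallPComplement_iff {x : G} : x ∈ hallPComplement p F hF ↔
    x ∈ F ∧ ∀ U : OpenNormalSubgroup G,
      (orderOf (QuotientGroup.mk' (U : Subgroup G) x)).Coprime p := Iff.rfl

theorem isClosed_hallPComplement (hFc : IsClosed (F : Set G)) :
    IsClosed (hallPComplement p F hF : Set G) := by
  have hset : (hallPComplement p F hF : Set G) = (F : Set G) ∩ ⋂ U : OpenNormalSubgroup G,
      QuotientGroup.mk' (U : Subgroup G) ⁻¹' {y | (orderOf y).Coprime p} := by
    ext x
    simp [mem_hallPComplement_iff]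
  rw [hset]
  refine hFc.inter (isClosed_iInter fun U => ?_)
  have := QuotientGroup.discreteTopology U.isOpen
  exact (isClosed_discrete _).preimage QuotientGroup.continuous_mk

instance [F.Normal] : (hallPComplement p F hF).Normal := ⟨fun x ⟨hxF, hx⟩ y => ⟨
  ‹F.Normal›.conj_mem x hxF y, fun U => by
    rw [map_mul, map_mul, map_inv, ← MulAut.conj_apply, MulEquiv.orderOf_eq]
    exact hx U⟩⟩

theorem IsHallPComplement.hallPComplement_le [TotallyDisconnectedSpace G] [F.Normal]
    {H : Subgroup G} (hH : IsHallPComplement G p F H) (hFc : IsClosed (F : Set G)) :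
    hallPComplement p F hF ≤ H :=
  hH.2.2.2.2 _ (fun _ hx => hx.1) (isClosed_hallPComplement hFc) inferInstance
    (quotientsCoprimeTo_of_coprime_orderOf_mk fun U _ hx => hx.2 U)

theorem mem_map_hallPComplement (hFc : IsClosed (F : Set G)) (U : OpenNormalSubgroup G)
    {y : G ⧸ (U : Subgroup G)} (hyF : y ∈ F.map (QuotientGroup.mk' (U : Subgroup G)))
    (hy : (orderOf y).Coprime p) :
    y ∈ (hallPComplement p F hF).map (QuotientGroup.mk' (U : Subgroup G)) := by
  obtain ⟨f, hfF, rfl⟩ := hyF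
  set t := p ^ (orderOf (QuotientGroup.mk' (U : Subgroup G) f)).totient
  obtain ⟨w, hw⟩ : ∃ w, MapClusterPt w Filter.atTop (fun k : ℕ => f ^ t ^ k) :=
    exists_clusterPt_of_compactSpace _
  refine ⟨w, ⟨?_, fun V => ?_⟩, ?_⟩
  · have := hw.mem_closure_of_mem _
      (Filter.mem_map.mpr (Filter.Eventually.of_forall fun k : ℕ => pow_mem hfF (t ^ k)))
    rwa [hFc.closure_eq] at this
  · obtain ⟨k, hk, hkw⟩ := hw.exists_ge_mk_eq V (orderOf (QuotientGroup.mk' (V : Subgroup G) f))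
    rw [← hkw, map_pow]
    refine coprime_orderOf_pow Fact.out (orderOf_pos _).ne' ?_
    rw [← pow_mul]
    refine Nat.pow_dvd_pow p (((Nat.factorization_lt p (orderOf_pos _).ne').le.trans hk).trans
      (Nat.le_mul_of_pos_left k (Nat.totient_pos.mpr (orderOf_pos _))))
  · obtain ⟨k, -, hkw⟩ := hw.exists_ge_mk_eq U 0
    rw [← hkw, map_pow]
    conv_rhs => rw [← pow_one (QuotientGroup.mk' (U : Subgroup G) f)]
    rw [pow_eq_pow_iff_modEq]
    have := (Nat.ModEq.pow_totient hy.symm).pow k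
    rwa [one_pow] at this

end HallPComplement

section SecondRadical

variable {G : Type*} [Group G] [TopologicalSpace G] [IsTopologicalGroup G] [CompactSpace G]
  {p : ℕ} [Fact p.Prime] {F : Subgroup G} [F.Normal] {Fq : Subgroup (G ⧸ F)} [Fq.Normal] {g : G}

theorem exists_pow_mem_of_mem_normalClosure (hFq : IsPronilpotent Fq) (hg : IsPElement p g)
    (hgFq : (g : G ⧸ F) ∈ Fq) {V : Subgroup G} [V.Normal] (hV : IsOpen (V : Set G))
    (hFV : F ≤ V) {x : G} (hx : x ∈ normalClosure {g}) : ∃ j, x ^ p ^ j ∈ V := by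
  have := quotient_finite_of_isOpen V hV
  set θ := QuotientGroup.map F V (MonoidHom.id G) (hFV.trans_eq (comap_id V).symm) with hθ_def
  have hθker : IsOpen (θ.ker : Set (G ⧸ F)) := by
    rw [hθ_def, QuotientGroup.ker_map, comap_id, coe_map]
    exact QuotientGroup.isOpenMap_coe _ hV
  have hθ : Function.Surjective θ := by
    rintro ⟨y⟩
    exact ⟨y, rfl⟩
  have := hFq.isNilpotent_map_s5 θ hθker
  have := ‹Fq.Normal›.map θ hθ
  obtain ⟨k, hk⟩ := hg.exists_orderOf_mk_dvd V hV
  have hxV : QuotientGroup.mk' V x ∈ normalClosure {QuotientGroup.mk' V g} := by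
    rw [← Set.image_singleton, ← map_normalClosure _ _ (QuotientGroup.mk'_surjective V)]
    exact mem_map_of_mem _ hx
  obtain ⟨j, hj⟩ := exists_pow_eq_one_of_mem_normalClosure (N := Fq.map θ) ⟨g, hgFq, rfl⟩
    ⟨k, orderOf_dvd_iff_pow_eq_one.mp hk⟩ hxV
  exact ⟨j, (QuotientGroup.eq_one_iff _).mp (by rwa [← map_pow] at hj)⟩

theorem isNilpotent_map_normalClosure (hFc : IsClosed (F : Set G)) (hF : IsPronilpotent F)
    (hFq : IsPronilpotent Fq) (hg : IsPElement p g) (hgFq : (g : G ⧸ F) ∈ Fq)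
    (hcomm : ∀ x ∈ hallPComplement p F hF, Commute x g) (U : OpenNormalSubgroup G) :
    Group.IsNilpotent ((normalClosure {g}).map (QuotientGroup.mk' (U : Subgroup G))) := by
  set π := QuotientGroup.mk' (U : Subgroup G)
  set C := (hallPComplement p F hF).map π
  have hcent : (normalClosure {g}).map π ≤ centralizer C := by
    refine (map_mono (normalClosure_le_normal ?_)).trans (map_centralizer_le_centralizer_image _ _)
    rw [Set.singleton_subset_iff, SetLike.mem_coe, mem_centralizer_iff]
    exact fun x hx => (hcomm x hx).eq
  have hpF : ∀ x ∈ normalClosure {g}, ∃ j, π x ^ p ^ j ∈ F.map π := by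
    intro x hx
    obtain ⟨j, hj⟩ := exists_pow_mem_of_mem_normalClosure hFq hg hgFq
      (isOpen_mono le_sup_right U.isOpen) (le_sup_left (b := (U : Subgroup G))) hx
    refine ⟨j, ?_⟩
    have := mem_map_of_mem π hj
    rwa [Subgroup.map_sup, QuotientGroup.map_mk'_self, sup_bot_eq, map_pow] at this
  have hpC : ∀ y ∈ F.map π, y ^ p ^ (orderOf y).factorization p ∈ C := fun y hy =>
    mem_map_hallPComplement hFc U (pow_mem hy _)
      (coprime_orderOf_pow Fact.out (orderOf_pos y).ne' dvd_rfl)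
  refine isNilpotent_of_le_centralizer_of_pow_mem (p := p) hcent ?_
  rintro _ ⟨x, hx, rfl⟩
  obtain ⟨j, hj⟩ := hpF x hx
  exact ⟨j + _, by rw [pow_add, pow_mul]; exact hpC _ hj⟩

end SecondRadical

theorem p_element_in_F2_not_F_acts_nontrivially_on_hall_general
    (G : Type) [Group G] [TopologicalSpace G] [IsTopologicalGroup G]
    [CompactSpace G] [TotallyDisconnectedSpace G]
    (p : ℕ) (hp : p.Prime)
    (F F2 : Subgroup G) [F.Normal]
    (hF : IsPronilpotentRadical G F) (hF2 : IsSecondRadical G F F2)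
    (g : G) (hg : IsPElement p g) (hgF2 : g ∈ F2) (hgF : g ∉ F)
    (H : Subgroup G) (hH : IsHallPComplement G p F H) :
    ∃ x ∈ H, ⁅x, g⁆ ≠ 1 := by
  have : Fact p.Prime := ⟨hp⟩
  obtain ⟨hFc, -, hFpro, hFmax⟩ := hF
  obtain ⟨Fq, ⟨-, hFqN, hFqpro, -⟩, rfl⟩ := hF2
  by_contra! hcomm
  have hcent : ∀ x ∈ hallPComplement p F hFpro, Commute x g := fun x hx =>
    commutatorElement_eq_one_iff_commute.mp (hcomm x (hH.hallPComplement_le hFc hx))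
  set K := (normalClosure {g}).topologicalClosure
  have hKpro : IsPronilpotent K := isPronilpotent_of_isNilpotent_map fun U => by
    rw [map_topologicalClosure_mk']
    exact isNilpotent_map_normalClosure hFc hFpro hFqpro hg hgF2 hcent U
  exact hgF (hFmax K (isClosed_topologicalClosure _) (is_normal_topologicalClosure _) hKpro
    (le_topologicalClosure _ (subset_normalClosure rfl)))

theorem p_element_in_F2_not_F_acts_nontrivially_on_hall
    (G : Type) [Group G] [TopologicalSpace G] [IsTopologicalGroup G]
    [CompactSpace G] [T2Space G] [TotallyDisconnectedSpace G]
    (p : ℕ) (hp : p.Prime)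
    (F F2 : Subgroup G) [F.Normal]
    (hF : IsPronilpotentRadical G F) (hF2 : IsSecondRadical G F F2)
    (g : G) (hg : IsPElement p g) (hgF2 : g ∈ F2) (hgF : g ∉ F)
    (H : Subgroup G) (hH : IsHallPComplement G p F H) :
    ∃ x ∈ H, ⁅x, g⁆ ≠ 1 :=
  p_element_in_F2_not_F_acts_nontrivially_on_hall_general G p hp F F2 hF hF2 g hg hgF2 hgF H hH
end

section
/- If an element g of a group G has a finite left Engel sink, then g has a smallest left Engel sink E(g) (namely, the intersection of all left Engel sinks of g is a left Engel sink of g), and for every s ∈ E(g) there is an integer k ≥ 1 such that s = [s, g, ..., g] with g repeated k times. -/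
open scoped commutatorElement

/-!
Commutation with `g` on the right is a self-map `y ↦ [y, g]` of `G`, and `[x, g, …, g]` is
the orbit of `x` under it. If the orbit eventually stays in a finite set, pigeonhole makes it
eventually periodic, so the periodic points of `y ↦ [y, g]` form a left Engel sink. Conversely a
periodic point returns to itself arbitrarily late, so it lies in every left Engel sink. Hence the
periodic points are the smallest left Engel sink, and they are exactly the `s` with
`s = [s, g, …, g]`.
-/

open Function Set

namespace Function

variable {α : Type*} {f : α → α} {x y : α}

theorem exists_forall_ge_iterate_mem_periodicPts_of_finite {S : Set α} {n₀ : ℕ}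
    (hS : S.Finite) (h : ∀ n ≥ n₀, f^[n] x ∈ S) :
    ∃ m, ∀ n ≥ m, f^[n] x ∈ periodicPts f := by
  obtain ⟨i, j, hij, heq⟩ := hS.exists_lt_map_eq_of_forall_mem
    (f := fun n => f^[n₀ + n] x) fun n => h _ (Nat.le_add_right _ _)
  have hper : IsPeriodicPt f (j - i) (f^[n₀ + i] x) := by
    rw [IsPeriodicPt, IsFixedPt, ← iterate_add_apply, show j - i + (n₀ + i) = n₀ + j by omega]
    exact heq.symm
  refine ⟨n₀ + i, fun n hn => ?_⟩
  rw [show n = n - (n₀ + i) + (n₀ + i) by omega, iterate_add_apply]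
  exact mk_mem_periodicPts (by omega) (hper.apply_iterate _)

theorem mem_of_mem_periodicPts_of_forall_ge_iterate_mem {E : Set α} {n₁ : ℕ}
    (hy : y ∈ periodicPts f) (h : ∀ n ≥ n₁, f^[n] y ∈ E) : y ∈ E := by
  obtain ⟨p, hp, hper⟩ := hy
  simpa only [(hper.const_mul n₁).eq] using h (n₁ * p) (Nat.le_mul_of_pos_right n₁ hp)

end Function

section LeftEngelSink

variable {G : Type*} [Group G] {g : G} {E : Set G}

theorem commIter_eq_iterate (x g : G) (n : ℕ) : commIter x g n = (⁅·, g⁆)^[n] x := by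
  induction n with
  | zero => rfl
  | succ n ih => rw [iterate_succ_apply', ← ih]; rfl

theorem IsLeftEngelSink.periodicPts_subset (hE : IsLeftEngelSink g E) :
    periodicPts (⁅·, g⁆) ⊆ E := fun y hy =>
  let ⟨_, _, htail⟩ := hE y
  mem_of_mem_periodicPts_of_forall_ge_iterate_mem hy fun n hn =>
    commIter_eq_iterate y g n ▸ htail n hn

theorem IsLeftEngelSink.isLeftEngelSink_periodicPts (hfin : E.Finite) (hE : IsLeftEngelSink g E) :
    IsLeftEngelSink g (periodicPts (⁅·, g⁆)) := fun x => by
  obtain ⟨n₀, -, htail⟩ := hE x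
  obtain ⟨m, hm⟩ := exists_forall_ge_iterate_mem_periodicPts_of_finite hfin fun n hn =>
    commIter_eq_iterate x g n ▸ htail n hn
  exact ⟨m + 1, m.succ_pos, fun n hn => commIter_eq_iterate x g n ▸ hm n (by omega)⟩

theorem sInter_isLeftEngelSink_eq_periodicPts (hfin : E.Finite) (hE : IsLeftEngelSink g E) :
    ⋂₀ {E : Set G | IsLeftEngelSink g E} = periodicPts (⁅·, g⁆) :=
  (sInter_subset_of_mem (hE.isLeftEngelSink_periodicPts hfin)).antisymm
    (subset_sInter fun _ => IsLeftEngelSink.periodicPts_subset)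

end LeftEngelSink

theorem smallest_left_engel_sink
    (G : Type) [Group G] (g : G)
    (h : ∃ E : Set G, E.Finite ∧ IsLeftEngelSink g E) :
    IsLeftEngelSink g (⋂₀ {E : Set G | IsLeftEngelSink g E}) ∧
      ∀ s ∈ ⋂₀ {E : Set G | IsLeftEngelSink g E},
        ∃ k : ℕ, 1 ≤ k ∧ s = commIter s g k := by
  obtain ⟨E, hfin, hE⟩ := h
  rw [sInter_isLeftEngelSink_eq_periodicPts hfin hE]
  refine ⟨hE.isLeftEngelSink_periodicPts hfin, fun s ⟨k, hk, hper⟩ => ⟨k, hk, ?_⟩⟩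
  rw [commIter_eq_iterate]
  exact hper.eq.symm
end

section
/- Let G be a metabelian group (i.e. the derived subgroup of G is abelian) and let g ∈ G. Then every right Engel sink of the inverse g⁻¹ is a left Engel sink of g. -/
open scoped commutatorElement

/-! Writing `w = [x, g]`, one has `[g⁻¹, gw] = [w, g]`, and for `v` in the derived subgroup
`[v, gw] = [v, g]` because `v` and `w` commute. Hence `[g⁻¹, gw, …, gw]` (`m` copies) equals
`[x, g, …, g]` (`m + 1` copies), so the right Engel sequence of `g⁻¹` at `gw` is a shift of the
left Engel sequence of `g` at `x`. -/

section

variable {G : Type*} [Group G]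

theorem commutatorElement_inv_mul_left (g w : G) : ⁅g⁻¹, g * w⁆ = ⁅w, g⁆ := by
  simp only [commutatorElement_def]
  group

theorem commutatorElement_mul_of_commute {a b c : G} (h : Commute a c) :
    ⁅a, b * c⁆ = ⁅a, b⁆ := by
  calc ⁅a, b * c⁆ = a * b * (c * a⁻¹) * c⁻¹ * b⁻¹ := by group
    _ = a * b * (a⁻¹ * c) * c⁻¹ * b⁻¹ := by rw [h.inv_left.eq]
    _ = ⁅a, b⁆ := by group

theorem commIter_succ_mem_commutator (x g : G) (n : ℕ) :
    commIter x g (n + 1) ∈ commutator G :=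
  Subgroup.commutator_mem_commutator (Subgroup.mem_top _) (Subgroup.mem_top g)

theorem commIter_inv_mul_commutatorElement
    (hmet : ∀ a ∈ commutator G, ∀ b ∈ commutator G, a * b = b * a) (x g : G) (m : ℕ) :
    commIter g⁻¹ (g * ⁅x, g⁆) (m + 1) = commIter x g (m + 2) := by
  induction m with
  | zero => exact commutatorElement_inv_mul_left g ⁅x, g⁆
  | succ m ih =>
    change ⁅commIter g⁻¹ (g * ⁅x, g⁆) (m + 1), g * ⁅x, g⁆⁆ = ⁅commIter x g (m + 2), g⁆
    rw [ih]
    exact commutatorElement_mul_of_commute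
      (hmet _ (commIter_succ_mem_commutator x g _) _ (commIter_succ_mem_commutator x g 0))

end

theorem right_sink_of_inverse_is_left_sink_metabelian
    (G : Type) [Group G]
    (hmet : ∀ a ∈ commutator G, ∀ b ∈ commutator G, a * b = b * a)
    (g : G) (R : Set G) (hR : IsRightEngelSink g⁻¹ R) :
    IsLeftEngelSink g R := by
  intro x
  obtain ⟨n₀, hn₀, hsink⟩ := hR (g * ⁅x, g⁆)
  refine ⟨n₀ + 1, n₀.succ_pos, fun n hn => ?_⟩
  obtain ⟨m, rfl⟩ : ∃ m, n = m + 2 := ⟨n - 2, by omega⟩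
  rw [← commIter_inv_mul_commutatorElement hmet]
  exact hsink (m + 1) (by omega)
end
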